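/- Let Z be a standard Gaussian random variable and ξ a centered Gaussian with variance v > 0, independent of Z. Define g(c) = E[−σ(Z)·c(Z+ξ) + log(1 + e^{c(Z+ξ)})] for c ∈ ℝ. Then g is strictly convex on ℝ, with g'(0) < 0 and g'(1) > 0, and hence g has a unique minimizer c* satisfying 0 < c* < 1. -/

import Mathlib

open MeasureTheory ProbabilityTheory

noncomputable def sigmoid (z : ℝ) : ℝ := 1 / (1 + Real.exp (-z))

noncomputable def scaleLoss {Ω : Type*} [MeasurableSpace Ω] (P : Measure Ω)
    (Z ξ : Ω → ℝ) (c : ℝ) : ℝ :=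
  ∫ ω, (-(sigmoid (Z ω)) * (c * (Z ω + ξ ω))
    + Real.log (1 + Real.exp (c * (Z ω + ξ ω)))) ∂P

/-! Write `W = Z + ξ`. The integrand is `ℓ(σ(Z), c W)` with `ℓ(p, x) = -p x + log (1 + eˣ)`,
strictly convex in `x`, and `W ≠ 0` almost surely, so `g` is strictly convex with
`g'(c) = E[(σ(c W) - σ(Z)) W]`. Put `q(x) = (σ(x) - 1/2) x`, an even function strictly increasing
in `|x|`. Since `ξ` is centred and independent of `Z`, `g'(c) = E[(σ(c W) - 1/2) W] - E[q(Z)]`;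
hence `g'(0) = -E[q(Z)] < 0`, and `g'(1) = E[q(W)] - E[q(Z)] > 0` because `W ~ N(0, 1 + v)` has
the law of `√(1 + v) Z`. By Darboux `g'` vanishes somewhere in `(0, 1)`; by convexity that point
is a global minimizer, unique by strict convexity. -/

open Set
open scoped NNReal

lemma sigmoid_eq_real_sigmoid : sigmoid = Real.sigmoid := by
  funext z
  rw [sigmoid, Real.sigmoid_def, one_div]

lemma Real.hasDerivAt_log_one_add_exp (x : ℝ) :
    HasDerivAt (fun x => Real.log (1 + Real.exp x)) (Real.sigmoid x) x := by
  have h := ((Real.hasDerivAt_exp x).const_add 1).log (by positivity)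
  convert h using 1
  rw [Real.sigmoid_def, Real.exp_neg]
  field_simp
  ring

lemma Real.log_one_add_exp_le (x : ℝ) : Real.log (1 + Real.exp x) ≤ Real.log 2 + |x| := by
  have h1 : 1 + Real.exp x ≤ 2 * Real.exp |x| := by
    have := Real.exp_le_exp.2 (le_abs_self x)
    have := Real.one_le_exp (abs_nonneg x)
    linarith
  calc Real.log (1 + Real.exp x) ≤ Real.log (2 * Real.exp |x|) :=
        Real.log_le_log (by positivity) h1
    _ = Real.log 2 + |x| := by rw [Real.log_mul two_ne_zero (Real.exp_pos _).ne', Real.log_exp]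

noncomputable def bceLoss (p x : ℝ) : ℝ := -p * x + Real.log (1 + Real.exp x)

lemma hasDerivAt_bceLoss (p x : ℝ) : HasDerivAt (bceLoss p) (Real.sigmoid x - p) x := by
  have h := ((hasDerivAt_id x).const_mul (-p)).add (Real.hasDerivAt_log_one_add_exp x)
  exact h.congr_deriv (by ring)

lemma continuous_bceLoss : Continuous fun q : ℝ × ℝ => bceLoss q.1 q.2 := by
  unfold bceLoss
  fun_prop (disch := intro; positivity)

lemma strictConvexOn_bceLoss (p : ℝ) : StrictConvexOn ℝ univ (bceLoss p) := by
  refine StrictMono.strictConvexOn_univ_of_deriv (continuous_bceLoss.comp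
    (Continuous.prodMk_right p)) ?_
  rw [funext fun x => (hasDerivAt_bceLoss p x).deriv]
  exact fun a b hab => sub_lt_sub_right (Real.sigmoid_strictMono hab) p

lemma strictConvexOn_bceLoss_mul (p : ℝ) {w : ℝ} (hw : w ≠ 0) :
    StrictConvexOn ℝ univ fun c => bceLoss p (c * w) := by
  refine ⟨convex_univ, fun a _ b _ hab s t hs ht hst => ?_⟩
  have := (strictConvexOn_bceLoss p).2 (mem_univ (a * w)) (mem_univ (b * w))
    ((mul_left_injective₀ hw).ne hab) hs ht hst
  simpa only [smul_eq_mul, add_mul, mul_assoc] using this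

lemma abs_bceLoss_le {p : ℝ} (hp : p ∈ Icc (0 : ℝ) 1) (x : ℝ) :
    |bceLoss p x| ≤ 2 * |x| + Real.log 2 := by
  have hlog := Real.log_nonneg (by linarith [Real.exp_pos x] : (1 : ℝ) ≤ 1 + Real.exp x)
  have hpx : |-p * x| ≤ |x| := by
    rw [abs_mul, abs_neg, abs_of_nonneg hp.1]
    exact mul_le_of_le_one_left (abs_nonneg x) hp.2
  calc |bceLoss p x| ≤ |-p * x| + |Real.log (1 + Real.exp x)| := abs_add_le _ _
    _ ≤ |x| + (Real.log 2 + |x|) := by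
        rw [abs_of_nonneg hlog]; exact add_le_add hpx (Real.log_one_add_exp_le x)
    _ = 2 * |x| + Real.log 2 := by ring

noncomputable def sigmoidCenteredMul (x : ℝ) : ℝ := (Real.sigmoid x - 2⁻¹) * x

lemma sigmoidCenteredMul_abs (x : ℝ) : sigmoidCenteredMul |x| = sigmoidCenteredMul x := by
  rcases abs_cases x with ⟨h, -⟩ | ⟨h, -⟩
  · rw [h]
  · rw [h, sigmoidCenteredMul, sigmoidCenteredMul, Real.sigmoid_neg]; ring

lemma sigmoidCenteredMul_lt_of_abs_lt {x y : ℝ} (h : |x| < |y|) :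
    sigmoidCenteredMul x < sigmoidCenteredMul y := by
  rw [← sigmoidCenteredMul_abs x, ← sigmoidCenteredMul_abs y]
  have hx : 2⁻¹ ≤ Real.sigmoid |x| := by
    simpa using Real.sigmoid_le (abs_nonneg x)
  have hxy := Real.sigmoid_lt h
  have hy : 0 < |y| := (abs_nonneg x).trans_lt h
  unfold sigmoidCenteredMul
  nlinarith [abs_nonneg x]

lemma abs_sigmoidCenteredMul_le (x : ℝ) : |sigmoidCenteredMul x| ≤ |x| := by
  rw [sigmoidCenteredMul, abs_mul]
  refine mul_le_of_le_one_left (abs_nonneg x) (abs_le.2 ⟨?_, ?_⟩) <;>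
    linarith [Real.sigmoid_nonneg x, Real.sigmoid_le_one x]

lemma continuous_sigmoidCenteredMul : Continuous sigmoidCenteredMul := by
  unfold sigmoidCenteredMul; fun_prop

lemma ConvexOn.exists_isMinOn_mem_Ioo_of_deriv {f : ℝ → ℝ} (hf : ConvexOn ℝ univ f)
    (hd : Differentiable ℝ f) {a b : ℝ} (ha : deriv f a < 0) (hb : 0 < deriv f b) :
    ∃ c ∈ Ioo a b, IsMinOn f univ c := by
  have hab : a ≤ b := le_of_not_gt fun hba =>
    (ha.trans hb).not_ge (monotoneOn_deriv hf (fun x _ => hd x) trivial trivial hba.le)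
  obtain ⟨c, hc, hc0⟩ := exists_hasDerivWithinAt_eq_of_gt_of_lt hab
    (fun x _ => (hd x).hasDerivAt.hasDerivWithinAt) ha hb
  refine ⟨c, hc, hf.isMinOn_of_rightDeriv_eq_zero (by simp) ?_⟩
  rw [(hd c).hasDerivAt.hasDerivWithinAt.derivWithin (uniqueDiffWithinAt_Ioi c), hc0]

section Integral

variable {Ω : Type*} [MeasurableSpace Ω] {μ : Measure Ω}

lemma integral_lt_integral_of_ae_lt [NeZero μ] {f g : Ω → ℝ} (hf : Integrable f μ)
    (hg : Integrable g μ) (hfg : ∀ᵐ ω ∂μ, f ω < g ω) : ∫ ω, f ω ∂μ < ∫ ω, g ω ∂μ := by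
  have hpos : ∀ᵐ ω ∂μ, 0 < g ω - f ω := hfg.mono fun ω h => sub_pos.2 h
  rw [← sub_pos, ← integral_sub hg hf, integral_pos_iff_support_of_nonneg_ae
    (f := fun ω => g ω - f ω) (hpos.mono fun _ h => h.le) (hg.sub hf)]
  exact pos_iff_ne_zero.2 fun h => frequently_ae_iff.1 hpos.frequently
    (measure_mono_null (fun ω hω => ne_of_gt hω) h)

lemma strictConvexOn_integral [NeZero μ] {E : Type*} [AddCommGroup E] [Module ℝ E] {s : Set E}
    (hs : Convex ℝ s) {F : E → Ω → ℝ} (hF : ∀ x ∈ s, Integrable (F x) μ)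
    (hconv : ∀ᵐ ω ∂μ, StrictConvexOn ℝ s (F · ω)) :
    StrictConvexOn ℝ s fun x => ∫ ω, F x ω ∂μ := by
  refine ⟨hs, fun a ha b hb hab t u ht hu htu => ?_⟩
  simp only [smul_eq_mul, ← integral_const_mul]
  rw [← integral_add ((hF a ha).const_mul t) ((hF b hb).const_mul u)]
  exact integral_lt_integral_of_ae_lt (hF _ (hs ha hb ht.le hu.le htu))
    (((hF a ha).const_mul t).add ((hF b hb).const_mul u))
    (hconv.mono fun ω h => by simpa only [smul_eq_mul] using h.2 ha hb hab ht hu htu)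

variable {p W : Ω → ℝ}

lemma integrable_bceLoss_mul [IsFiniteMeasure μ] (hp : ∀ᵐ ω ∂μ, p ω ∈ Icc (0 : ℝ) 1)
    (hpm : AEStronglyMeasurable p μ) (hW : Integrable W μ) (c : ℝ) :
    Integrable (fun ω => bceLoss (p ω) (c * W ω)) μ := by
  refine ((hW.abs.const_mul (2 * |c|)).add (integrable_const (Real.log 2))).mono'
    (continuous_bceLoss.comp_aestronglyMeasurable (hpm.prodMk (hW.1.const_mul c)))
    (hp.mono fun ω hpω => ?_)
  calc ‖bceLoss (p ω) (c * W ω)‖ ≤ 2 * |c * W ω| + Real.log 2 := abs_bceLoss_le hpω _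
    _ = 2 * |c| * |W ω| + Real.log 2 := by rw [abs_mul]; ring

lemma hasDerivAt_integral_bceLoss_mul [IsFiniteMeasure μ] (hp : ∀ᵐ ω ∂μ, p ω ∈ Icc (0 : ℝ) 1)
    (hpm : AEStronglyMeasurable p μ) (hW : Integrable W μ) (c : ℝ) :
    HasDerivAt (fun c => ∫ ω, bceLoss (p ω) (c * W ω) ∂μ)
      (∫ ω, (Real.sigmoid (c * W ω) - p ω) * W ω ∂μ) c := by
  have hderiv (ω : Ω) (x : ℝ) : HasDerivAt (fun c => bceLoss (p ω) (c * W ω))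
      ((Real.sigmoid (x * W ω) - p ω) * W ω) x :=
    ((hasDerivAt_bceLoss (p ω) (x * W ω)).comp x (hasDerivAt_mul_const (W ω)) :)
  refine (hasDerivAt_integral_of_dominated_loc_of_deriv_le (bound := fun ω => |W ω|)
    Filter.univ_mem (.of_forall fun x => (integrable_bceLoss_mul hp hpm hW x).1)
    (integrable_bceLoss_mul hp hpm hW c) ?_ ?_ hW.abs
    (ae_of_all _ fun ω x _ => hderiv ω x)).2
  · exact ((continuous_sigmoid.comp_aestronglyMeasurable (hW.1.const_mul c)).sub hpm).mul hW.1
  · refine hp.mono fun ω hpω x _ => ?_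
    rw [norm_mul, Real.norm_eq_abs]
    refine mul_le_of_le_one_left (abs_nonneg _) (abs_sub_le_iff.2 ⟨?_, ?_⟩) <;>
      linarith [Real.sigmoid_nonneg (x * W ω), Real.sigmoid_le_one (x * W ω), hpω.1, hpω.2]

lemma strictConvexOn_integral_bceLoss_mul [IsFiniteMeasure μ] [NeZero μ]
    (hp : ∀ᵐ ω ∂μ, p ω ∈ Icc (0 : ℝ) 1) (hpm : AEStronglyMeasurable p μ) (hW : Integrable W μ)
    (hW0 : ∀ᵐ ω ∂μ, W ω ≠ 0) :
    StrictConvexOn ℝ univ fun c => ∫ ω, bceLoss (p ω) (c * W ω) ∂μ :=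
  strictConvexOn_integral convex_univ (fun c _ => integrable_bceLoss_mul hp hpm hW c)
    (hW0.mono fun _ h => strictConvexOn_bceLoss_mul _ h)

lemma integrable_sigmoidCenteredMul_comp {X : Ω → ℝ} (hX : Integrable X μ) :
    Integrable (fun ω => sigmoidCenteredMul (X ω)) μ :=
  hX.abs.mono' (continuous_sigmoidCenteredMul.comp_aestronglyMeasurable hX.1)
    (ae_of_all _ fun _ => abs_sigmoidCenteredMul_le _)

lemma integral_sigmoidCenteredMul_mul_lt [NeZero μ] {X : Ω → ℝ} (hX : Integrable X μ)
    (hX0 : ∀ᵐ ω ∂μ, X ω ≠ 0) {s t : ℝ} (hst : |s| < |t|) :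
    ∫ ω, sigmoidCenteredMul (s * X ω) ∂μ < ∫ ω, sigmoidCenteredMul (t * X ω) ∂μ :=
  integral_lt_integral_of_ae_lt (integrable_sigmoidCenteredMul_comp (hX.const_mul s))
    (integrable_sigmoidCenteredMul_comp (hX.const_mul t))
    (hX0.mono fun _ h => sigmoidCenteredMul_lt_of_abs_lt
      (by simpa only [abs_mul] using mul_lt_mul_of_pos_right hst (abs_pos.2 h)))

end Integral

section Probability

variable {Ω : Type*} [MeasurableSpace Ω] {P : Measure Ω}

lemma integral_sigmoid_sub_sigmoid_mul_add {Z ξ : Ω → ℝ} (hZ : Integrable Z P)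
    (hξ : Integrable ξ P) (hξ0 : ∫ ω, ξ ω ∂P = 0) (hind : IndepFun Z ξ P) (c : ℝ) :
    ∫ ω, (Real.sigmoid (c * (Z ω + ξ ω)) - Real.sigmoid (Z ω)) * (Z ω + ξ ω) ∂P
      = ∫ ω, (Real.sigmoid (c * (Z ω + ξ ω)) - 2⁻¹) * (Z ω + ξ ω) ∂P
        - ∫ ω, sigmoidCenteredMul (Z ω) ∂P := by
  have hcross : ∫ ω, (Real.sigmoid (Z ω) - 2⁻¹) * ξ ω ∂P = 0 := by
    have h := hind.integral_comp_mul_comp hZ.1.aemeasurable hξ.1.aemeasurable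
      (f := fun z => Real.sigmoid z - 2⁻¹) (g := id) (by fun_prop) aestronglyMeasurable_id
    simpa [Function.comp_def, hξ0] using h
  have hbdd (x : ℝ) : ‖Real.sigmoid x - 2⁻¹‖ ≤ 1 := by
    rw [Real.norm_eq_abs, abs_le]
    constructor <;> linarith [Real.sigmoid_nonneg x, Real.sigmoid_le_one x]
  have hA : Integrable (fun ω => (Real.sigmoid (c * (Z ω + ξ ω)) - 2⁻¹) * (Z ω + ξ ω)) P :=
    (hZ.add hξ).bdd_mul (by fun_prop) (ae_of_all _ fun _ => hbdd _)
  have hB := integrable_sigmoidCenteredMul_comp hZ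
  have hC : Integrable (fun ω => (Real.sigmoid (Z ω) - 2⁻¹) * ξ ω) P :=
    hξ.bdd_mul (by fun_prop) (ae_of_all _ fun _ => hbdd _)
  calc ∫ ω, (Real.sigmoid (c * (Z ω + ξ ω)) - Real.sigmoid (Z ω)) * (Z ω + ξ ω) ∂P
      = ∫ ω, ((Real.sigmoid (c * (Z ω + ξ ω)) - 2⁻¹) * (Z ω + ξ ω)
          - sigmoidCenteredMul (Z ω) - (Real.sigmoid (Z ω) - 2⁻¹) * ξ ω) ∂P := by
        congr 1 with ω; rw [sigmoidCenteredMul]; ring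
    _ = _ := by
        have hAB : Integrable (fun ω => (Real.sigmoid (c * (Z ω + ξ ω)) - 2⁻¹) * (Z ω + ξ ω)
            - sigmoidCenteredMul (Z ω)) P := hA.sub hB
        rw [integral_sub hAB hC, integral_sub hA hB, hcross, sub_zero]

lemma ProbabilityTheory.HasLaw.integrable_of_gaussianReal {X : Ω → ℝ} {m : ℝ} {v : ℝ≥0}
    (hX : HasLaw X (gaussianReal m v) P) : Integrable X P := by
  have h := (memLp_id_gaussianReal (μ := m) (v := v) 1).integrable le_rfl
  rw [← hX.map_eq] at h
  exact h.comp_aemeasurable hX.aemeasurable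

lemma ProbabilityTheory.HasLaw.ae_ne_of_gaussianReal {X : Ω → ℝ} {m : ℝ} {v : ℝ≥0}
    (hX : HasLaw X (gaussianReal m v) P) (hv : v ≠ 0) (a : ℝ) : ∀ᵐ ω ∂P, X ω ≠ a := by
  rw [hX.ae_iff (p := (· ≠ a)) (by measurability)]
  exact (gaussianReal_absolutelyContinuous m hv).ae_le (volume.ae_ne a)

lemma integral_sigmoidCenteredMul_pos_of_gaussianReal {X : Ω → ℝ} {m : ℝ} {v : ℝ≥0}
    (hX : HasLaw X (gaussianReal m v) P) (hv : v ≠ 0) :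
    0 < ∫ ω, sigmoidCenteredMul (X ω) ∂P := by
  have := hX.isProbabilityMeasure
  simpa [sigmoidCenteredMul] using integral_sigmoidCenteredMul_mul_lt
    hX.integrable_of_gaussianReal (hX.ae_ne_of_gaussianReal hv 0) (s := 0) (t := 1) (by simp)

lemma integral_sigmoidCenteredMul_lt_of_gaussianReal {X Y : Ω → ℝ} {v w : ℝ≥0} (hvw : v < w)
    (hX : HasLaw X (gaussianReal 0 v) P) (hY : HasLaw Y (gaussianReal 0 w) P) :
    ∫ ω, sigmoidCenteredMul (X ω) ∂P < ∫ ω, sigmoidCenteredMul (Y ω) ∂P := by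
  have := hY.isProbabilityMeasure
  have hw : 0 < w := bot_le.trans_lt hvw
  set s : ℝ := √(v / w)
  have hs : |s| < |1| := by
    rw [abs_one, abs_of_nonneg (Real.sqrt_nonneg _), Real.sqrt_lt' one_pos, one_pow]
    exact (div_lt_one (NNReal.coe_pos.2 hw)).2 hvw
  have hsY : HasLaw (fun ω => s * Y ω) (gaussianReal 0 v) P := by
    refine HasLaw.comp ⟨(measurable_const_mul s).aemeasurable, ?_⟩ hY
    rw [gaussianReal_map_const_mul, mul_zero]
    congr 1
    ext
    simp only [NNReal.coe_mul, NNReal.coe_mk, s]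
    rw [Real.sq_sqrt (by positivity), div_mul_cancel₀ _ (NNReal.coe_pos.2 hw).ne']
  have hq := continuous_sigmoidCenteredMul.aestronglyMeasurable (μ := gaussianReal 0 v)
  calc ∫ ω, sigmoidCenteredMul (X ω) ∂P = ∫ ω, sigmoidCenteredMul (s * Y ω) ∂P :=
        (hX.integral_comp hq).trans (hsY.integral_comp hq).symm
    _ < ∫ ω, sigmoidCenteredMul (1 * Y ω) ∂P := integral_sigmoidCenteredMul_mul_lt
        hY.integrable_of_gaussianReal (hY.ae_ne_of_gaussianReal hw.ne' 0) hs
    _ = ∫ ω, sigmoidCenteredMul (Y ω) ∂P := by simp only [one_mul]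

end Probability

/-- For `Z` standard Gaussian and `ξ ~ N(0,v)`, `v > 0`, independent of `Z`, the function
`g(c) = E[−σ(Z)·c(Z+ξ) + log(1+e^{c(Z+ξ)})]` is strictly convex on `ℝ`, has `g'(0) < 0`
and `g'(1) > 0`, and hence has a unique minimizer `c*` with `0 < c* < 1`. -/
theorem scaleLoss_strictConvex_unique_min
    {Ω : Type*} [MeasurableSpace Ω] (P : Measure Ω) [IsProbabilityMeasure P]
    (Z ξ : Ω → ℝ) (v : NNReal) (hv : 0 < v)
    (hZ : Measure.map Z P = gaussianReal 0 1)
    (hξ : Measure.map ξ P = gaussianReal 0 v)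
    (hind : IndepFun Z ξ P) :
    StrictConvexOn ℝ Set.univ (scaleLoss P Z ξ)
    ∧ deriv (scaleLoss P Z ξ) 0 < 0
    ∧ 0 < deriv (scaleLoss P Z ξ) 1
    ∧ ∃ cs : ℝ, (∀ c, scaleLoss P Z ξ cs ≤ scaleLoss P Z ξ c)
        ∧ cs ∈ Set.Ioo (0 : ℝ) 1
        ∧ ∀ c', (∀ c, scaleLoss P Z ξ c' ≤ scaleLoss P Z ξ c) → c' = cs := by
  have hZ' : HasLaw Z (gaussianReal 0 1) P :=
    ⟨.of_map_ne_zero (hZ ▸ IsProbabilityMeasure.ne_zero _), hZ⟩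
  have hξ' : HasLaw ξ (gaussianReal 0 v) P :=
    ⟨.of_map_ne_zero (hξ ▸ IsProbabilityMeasure.ne_zero _), hξ⟩
  have hW : HasLaw (fun ω => Z ω + ξ ω) (gaussianReal 0 (1 + v)) P := by
    simpa [gaussianReal_conv_gaussianReal] using hind.hasLaw_fun_add hZ' hξ'
  have hσ : ∀ᵐ ω ∂P, Real.sigmoid (Z ω) ∈ Icc (0 : ℝ) 1 :=
    ae_of_all _ fun ω => ⟨Real.sigmoid_nonneg _, Real.sigmoid_le_one _⟩
  have hσm : AEStronglyMeasurable (fun ω => Real.sigmoid (Z ω)) P :=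
    continuous_sigmoid.comp_aestronglyMeasurable hZ'.aemeasurable.aestronglyMeasurable
  have hg : scaleLoss P Z ξ
      = fun c => ∫ ω, bceLoss (Real.sigmoid (Z ω)) (c * (Z ω + ξ ω)) ∂P := by
    rw [← sigmoid_eq_real_sigmoid]; rfl
  have hderiv (c : ℝ) := hasDerivAt_integral_bceLoss_mul hσ hσm hW.integrable_of_gaussianReal c
  have hderiv_eq (c : ℝ) : deriv (scaleLoss P Z ξ) c
      = ∫ ω, (Real.sigmoid (c * (Z ω + ξ ω)) - 2⁻¹) * (Z ω + ξ ω) ∂P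
        - ∫ ω, sigmoidCenteredMul (Z ω) ∂P := by
    rw [hg, (hderiv c).deriv, integral_sigmoid_sub_sigmoid_mul_add hZ'.integrable_of_gaussianReal
      hξ'.integrable_of_gaussianReal (by simp [hξ'.integral_eq]) hind]
  have hconv : StrictConvexOn ℝ univ (scaleLoss P Z ξ) := hg ▸
    strictConvexOn_integral_bceLoss_mul hσ hσm hW.integrable_of_gaussianReal
      (hW.ae_ne_of_gaussianReal (by positivity) 0)
  have hd0 : deriv (scaleLoss P Z ξ) 0 < 0 := by
    simpa [hderiv_eq] using integral_sigmoidCenteredMul_pos_of_gaussianReal hZ' one_ne_zero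
  have hd1 : 0 < deriv (scaleLoss P Z ξ) 1 := by
    simpa [hderiv_eq, sigmoidCenteredMul] using
      integral_sigmoidCenteredMul_lt_of_gaussianReal (lt_add_of_pos_right 1 hv) hZ' hW
  obtain ⟨cs, hcs, hmin⟩ := hconv.convexOn.exists_isMinOn_mem_Ioo_of_deriv
    (hg ▸ fun c => (hderiv c).differentiableAt) hd0 hd1
  exact ⟨hconv, hd0, hd1, cs, fun c => hmin (mem_univ c), hcs,
    fun c' hc' => hconv.eq_of_isMinOn (fun c _ => hc' c) hmin trivial trivial⟩
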